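/- Let f : S² → S² be an expanding Thurston map, C an invariant Jordan curve containing post f, d a visual metric with expansion factor Λ > 1, and φ Hölder continuous with exponent α ∈ (0,1]. Set C₁ = |φ|_α C₀^α / (1 − Λ^{−α}), where C₀ is the metric distortion constant. Then for all n ≤ m, every m-tile X^m, and all x, y ∈ X^m: |S_nφ(x) − S_nφ(y)| ≤ C₁ d(fⁿ(x), fⁿ(y))^α, where S_nφ(x) = Σ_{j=0}^{n−1} φ(f^j(x)). -/

import Mathlib

open scoped BigOperators
open Metric Filter MeasureTheory

noncomputable section

/-- A real-valued function on a metric space is Hölder continuous with exponent `α`. -/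
def HolderCont {X : Type*} [MetricSpace X] (α : ℝ) (φ : X → ℝ) : Prop :=
  ∃ C : ℝ, 0 ≤ C ∧ ∀ x y : X, |φ x - φ y| ≤ C * dist x y ^ α

/-- An abstract modulus of continuity: continuous at `0`, non-decreasing (on `[0,∞)`),
nonnegative, and vanishing at `0`. -/
def AbsModulus (h : ℝ → ℝ) : Prop :=
  ContinuousWithinAt h (Set.Ici 0) 0 ∧ MonotoneOn h (Set.Ici 0) ∧ h 0 = 0 ∧ ∀ t, 0 ≤ h t

/-- The class `C_h^b(X,d)` of continuous functions bounded by `b` with modulus of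
continuity `h`. -/
def ModClass {X : Type*} [MetricSpace X] (b : ℝ) (h : ℝ → ℝ) (u : X → ℝ) : Prop :=
  Continuous u ∧ (∀ x, |u x| ≤ b) ∧ ∀ x y : X, |u x - u y| ≤ h (dist x y)

/-- A Jordan curve in a topological space: a subset homeomorphic to the unit circle. -/
def IsJordanCurve {X : Type*} [TopologicalSpace X] (C : Set X) : Prop :=
  Nonempty (↥C ≃ₜ ↥(Metric.sphere (0 : EuclideanSpace ℝ (Fin 2)) 1))

/-- The metric of `X` is linearly locally connected with constant `L`. -/
def LinLocConn (X : Type*) [MetricSpace X] (L : ℝ) : Prop :=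
  1 ≤ L ∧
  (∀ (z : X) (r : ℝ), 0 < r → ∀ x ∈ ball z r, ∀ y ∈ ball z r,
    ∃ E : Set X, IsPreconnected E ∧ IsCompact E ∧ x ∈ E ∧ y ∈ E ∧ E ⊆ ball z (L * r)) ∧
  (∀ (z : X) (r : ℝ), 0 < r → ∀ x ∉ ball z r, ∀ y ∉ ball z r,
    ∃ E : Set X, IsPreconnected E ∧ IsCompact E ∧ x ∈ E ∧ y ∈ E ∧ E ⊆ (ball z (r / L))ᶜ)

/-- Abstract data of an expanding Thurston map on a compact metric space `X`
(playing the role of the sphere `S²`), together with the local degrees of its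
iterates: `localDeg n x` is the local degree `deg_{f^n}(x)`. -/
structure ExpandingThurston (X : Type*) [MetricSpace X] [CompactSpace X] where
  f : X → X
  continuous_f : Continuous f
  surjective_f : Function.Surjective f
  localDeg : ℕ → X → ℕ
  localDeg_pos : ∀ n x, 1 ≤ localDeg n x
  localDeg_zero : ∀ x, localDeg 0 x = 1
  localDeg_comp : ∀ m n x, localDeg (m + n) x = localDeg n x * localDeg m (f^[n] x)
  degree : ℕ
  two_le_degree : 2 ≤ degree
  fiber_finite : ∀ (n : ℕ) (x : X), (f^[n] ⁻¹' {x}).Finite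
  fiber_degree_sum : ∀ (n : ℕ) (x : X),
    ∑' y : ↥(f^[n] ⁻¹' {x}), (localDeg n (y : X) : ℝ) = (degree : ℝ) ^ n
  post : Set X
  post_finite : post.Finite

/-- The `n`-tiles of the cell decompositions of `X` induced by an expanding Thurston
map `F` and a Jordan curve `C ⊇ post F`: `tiles n` is the collection of `n`-tiles,
and `F.f^n` maps every `(n+k)`-tile homeomorphically onto a `k`-tile. -/
structure TileStructure {X : Type*} [MetricSpace X] [CompactSpace X]
    (F : ExpandingThurston X) (C : Set X) : Type _ where
  tiles : ℕ → Set (Set X)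
  isClosed_tiles : ∀ n, ∀ T ∈ tiles n, IsClosed T
  cover : ∀ n, ⋃₀ tiles n = Set.univ
  image_mem : ∀ n k, ∀ T ∈ tiles (n + k), F.f^[n] '' T ∈ tiles k
  injOn : ∀ n k, ∀ T ∈ tiles (n + k), Set.InjOn (F.f^[n]) T
  diam_tendsto : Tendsto (fun n => ⨆ T ∈ tiles n, Metric.diam T) atTop (nhds 0)

/-- The ambient metric of `X` is a visual metric for `F` with expansion factor `Λ`,
witnessed by the tile-diameter bounds `c⁻¹ Λ⁻ⁿ ≤ diam t ≤ c Λ⁻ⁿ` for `n`-tiles `t`. -/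
def IsVisualMetric {X : Type*} [MetricSpace X] [CompactSpace X]
    {F : ExpandingThurston X} {C : Set X} (T : TileStructure F C) (Λ : ℝ) : Prop :=
  1 < Λ ∧ ∃ c : ℝ, 1 ≤ c ∧ ∀ n, ∀ t ∈ T.tiles n,
    c⁻¹ * Λ⁻¹ ^ n ≤ Metric.diam t ∧ Metric.diam t ≤ c * Λ⁻¹ ^ n

/-- The Ruelle (transfer) operator
`L_ψ u (x) = ∑_{y ∈ f⁻¹(x)} deg_f(y) u(y) exp(ψ(y))`. -/
def ruelle {X : Type*} [MetricSpace X] [CompactSpace X] (F : ExpandingThurston X)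
    (ψ : X → ℝ) (u : X → ℝ) (x : X) : ℝ :=
  ∑' y : ↥(F.f ⁻¹' {x}), (F.localDeg 1 (y : X) : ℝ) * u (y : X) * Real.exp (ψ (y : X))

/-- The weighted preimage sum
`∑_{y ∈ f^{-n}(x)} deg_{fⁿ}(y) u(y) exp(S_n ψ (y))`. -/
def preimgSum {X : Type*} [MetricSpace X] [CompactSpace X] (F : ExpandingThurston X)
    (n : ℕ) (ψ u : X → ℝ) (x : X) : ℝ :=
  ∑' y : ↥(F.f^[n] ⁻¹' {x}),
    (F.localDeg n (y : X) : ℝ) * u (y : X) * Real.exp (birkhoffSum F.f ψ n (y : X))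

/-- `s` is an `(n,ε)`-separated set for `f`. -/
def IsSepSet {X : Type*} [MetricSpace X] (f : X → X) (n : ℕ) (ε : ℝ) (s : Finset X) : Prop :=
  ∀ x ∈ s, ∀ y ∈ s, x ≠ y → ∃ k < n, ε ≤ dist (f^[k] x) (f^[k] y)

/-- The supremum of `∑_{x ∈ s} exp (S_n φ (x))` over `(n,ε)`-separated sets `s`. -/
def sepSum {X : Type*} [MetricSpace X] (f : X → X) (φ : X → ℝ) (n : ℕ) (ε : ℝ) : ℝ :=
  ⨆ s : {s : Finset X // IsSepSet f n ε s}, ∑ x ∈ s.1, Real.exp (birkhoffSum f φ n x)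

/-- The topological pressure `P(f, φ)`, defined via `(n,ε)`-separated sets. -/
def pressure {X : Type*} [MetricSpace X] (f : X → X) (φ : X → ℝ) : ℝ :=
  limUnder (nhdsWithin (0 : ℝ) (Set.Ioi 0))
    (fun ε => limsup (fun n : ℕ => Real.log (sepSum f φ n ε) / n) atTop)

/-- A finite measurable partition of `X`. -/
def IsMeasPartition {X : Type*} [MeasurableSpace X] (P : Finset (Set X)) : Prop :=
  (∀ A ∈ P, MeasurableSet A) ∧ (∀ A ∈ P, ∀ B ∈ P, A ≠ B → A ∩ B = ∅) ∧
    ⋃₀ (↑P : Set (Set X)) = Set.univ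

/-- The entropy `H_μ(P) = -∑_{A ∈ P} μ(A) log μ(A)` of a partition. -/
def partitionEntropy {X : Type*} [MeasurableSpace X] (μ : Measure X)
    (P : Finset (Set X)) : ℝ :=
  ∑ A ∈ P, Real.negMulLog (μ A).toReal

/-- The dynamical refinement `P ∨ f⁻¹ P ∨ ⋯ ∨ f^{-(n-1)} P`. -/
def dynRefine {X : Type*} (f : X → X) (P : Finset (Set X)) (n : ℕ) : Finset (Set X) :=
  letI := Classical.decEq (Set X)
  (Finset.univ : Finset (Fin n → ↥P)).image
    fun c => ⋂ i : Fin n, f^[(i : ℕ)] ⁻¹' ((c i).1)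

/-- `h_μ(f, P) = lim_n H_μ(⋁_{j<n} f^{-j} P)/n`. -/
def entropyOfPartition {X : Type*} [MeasurableSpace X] (f : X → X) (μ : Measure X)
    (P : Finset (Set X)) : ℝ :=
  limsup (fun n : ℕ => partitionEntropy μ (dynRefine f P n) / n) atTop

/-- The measure-theoretic (Kolmogorov–Sinai) entropy `h_μ(f)`. -/
def kolSinEntropy {X : Type*} [MeasurableSpace X] (f : X → X) (μ : Measure X) : ℝ :=
  ⨆ P : {P : Finset (Set X) // IsMeasPartition P}, entropyOfPartition f μ P.1

/-- `μ` is an equilibrium state for `f` and `φ`: an `f`-invariant Borel probability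
measure with `h_μ(f) + ∫ φ dμ = P(f, φ)`. -/
def IsEquilibriumState {X : Type*} [MetricSpace X] [MeasurableSpace X]
    (f : X → X) (φ : X → ℝ) (μ : Measure X) : Prop :=
  IsProbabilityMeasure μ ∧ MeasurePreserving f μ μ ∧
    kolSinEntropy f μ + ∫ x, φ x ∂μ = pressure f φ

/-- `μ` is a Gibbs state with respect to `f`, the given tiles and `φ`, with constant `P`. -/
def IsGibbsState {X : Type*} [MetricSpace X] [MeasurableSpace X] (f : X → X)
    (tiles : ℕ → Set (Set X)) (φ : X → ℝ) (μ : Measure X) (P : ℝ) : Prop :=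
  IsProbabilityMeasure μ ∧ ∃ Cg : ℝ, 1 ≤ Cg ∧ ∀ n : ℕ, ∀ T ∈ tiles n, ∀ x ∈ T,
    Cg⁻¹ * Real.exp (birkhoffSum f φ n x - n * P) ≤ (μ T).toReal ∧
    (μ T).toReal ≤ Cg * Real.exp (birkhoffSum f φ n x - n * P)

/-- The normalized potential `φ̃ = φ - P(f,φ) + log u - log (u ∘ f)`. -/
def tildePot {X : Type*} [MetricSpace X] [CompactSpace X] (F : ExpandingThurston X)
    (φ u : X → ℝ) : X → ℝ :=
  fun x => φ x - pressure F.f φ + Real.log (u x) - Real.log (u (F.f x))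

/-- Integration of a real function against a finite signed Borel measure, via the
Jordan decomposition. -/
def sintegral {X : Type*} [MeasurableSpace X] (μ : SignedMeasure X) (u : X → ℝ) : ℝ :=
  (∫ x, u x ∂μ.toJordanDecomposition.posPart) -
    ∫ x, u x ∂μ.toJordanDecomposition.negPart

end

/-! For `j ≤ n ≤ m`, `f^j` maps an `m`-tile onto an `(m - j)`-tile, on which `f^(n - j)` expands
distances by at least `Λ^(n - j) / C₀`; hence `d(f^j x, f^j y) ≤ C₀ Λ^(j - n) d(fⁿ x, fⁿ y)`
for `x, y` in the `m`-tile. Summing the Hölder bounds `|φ(f^j x) - φ(f^j y)|` over `j < n`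
then gives a geometric series in `Λ^(-α)`. -/

open Finset

theorem abs_birkhoffSum_sub_le_sum {α : Type*} (f : α → α) (φ : α → ℝ) (n : ℕ) (x y : α) :
    |birkhoffSum f φ n x - birkhoffSum f φ n y| ≤
      ∑ j ∈ range n, |φ (f^[j] x) - φ (f^[j] y)| := by
  rw [birkhoffSum, birkhoffSum, ← sum_sub_distrib]
  exact abs_sum_le_sum_abs _ _

theorem sum_range_pow_sub_le {K : Type*} [Field K] [LinearOrder K] [IsStrictOrderedRing K]
    {r : K} (h0 : 0 ≤ r) (h1 : r < 1) (n : ℕ) :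
    ∑ j ∈ range n, r ^ (n - j) ≤ (1 - r)⁻¹ := by
  rw [← sum_range_reflect]
  calc ∑ j ∈ range n, r ^ (n - (n - 1 - j))
      = r * ∑ j ∈ range n, r ^ j := by
        rw [mul_sum]
        refine sum_congr rfl fun j hj => ?_
        rw [show n - (n - 1 - j) = j + 1 by have := mem_range.mp hj; omega, pow_succ']
    _ ≤ ∑ j ∈ Ico 0 n, r ^ j := by
        rw [← range_eq_Ico]
        exact mul_le_of_le_one_left (sum_nonneg fun j _ => pow_nonneg h0 j) h1.le
    _ ≤ r ^ 0 / (1 - r) := geom_sum_Ico_le_of_lt_one h0 h1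
    _ = (1 - r)⁻¹ := by rw [pow_zero, one_div]

theorem Real.div_pow_rpow {D Λ : ℝ} (hD : 0 ≤ D) (hΛ : 0 ≤ Λ) (k : ℕ) (α : ℝ) :
    (D / Λ ^ k) ^ α = D ^ α * (Λ ^ (-α)) ^ k := by
  rw [Real.div_rpow hD (pow_nonneg hΛ k), ← Real.rpow_pow_comm hΛ, Real.rpow_neg hΛ, inv_pow,
    div_eq_mul_inv]

theorem abs_birkhoffSum_sub_le_of_dist_iterate_le {X : Type*} [PseudoMetricSpace X]
    {f : X → X} {φ : X → ℝ} {H α K Λ D : ℝ} {n : ℕ} {x y : X}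
    (hH : 0 ≤ H) (hα : 0 < α) (hK : 0 ≤ K) (hΛ : 1 < Λ) (hD : 0 ≤ D)
    (hφ : ∀ a b : X, |φ a - φ b| ≤ H * dist a b ^ α)
    (horbit : ∀ j < n, dist (f^[j] x) (f^[j] y) ≤ K * (D / Λ ^ (n - j))) :
    |birkhoffSum f φ n x - birkhoffSum f φ n y| ≤ H * K ^ α / (1 - Λ ^ (-α)) * D ^ α := by
  have hΛ0 : 0 ≤ Λ := zero_le_one.trans hΛ.le
  set r := Λ ^ (-α)
  have hr1 : r < 1 := Real.rpow_lt_one_of_one_lt_of_neg hΛ (neg_lt_zero.mpr hα)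
  have hterm : ∀ j < n, |φ (f^[j] x) - φ (f^[j] y)| ≤ H * K ^ α * D ^ α * r ^ (n - j) := by
    intro j hj
    calc |φ (f^[j] x) - φ (f^[j] y)| ≤ H * dist (f^[j] x) (f^[j] y) ^ α := hφ _ _
      _ ≤ H * (K * (D / Λ ^ (n - j))) ^ α := by gcongr; exact horbit j hj
      _ = H * K ^ α * D ^ α * r ^ (n - j) := by
        rw [Real.mul_rpow hK (by positivity), Real.div_pow_rpow hD hΛ0]
        ring
  calc |birkhoffSum f φ n x - birkhoffSum f φ n y|
      ≤ ∑ j ∈ range n, |φ (f^[j] x) - φ (f^[j] y)| := abs_birkhoffSum_sub_le_sum f φ n x y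
    _ ≤ ∑ j ∈ range n, H * K ^ α * D ^ α * r ^ (n - j) :=
        sum_le_sum fun j hj => hterm j (mem_range.mp hj)
    _ = H * K ^ α * D ^ α * ∑ j ∈ range n, r ^ (n - j) := (mul_sum _ _ _).symm
    _ ≤ H * K ^ α * D ^ α * (1 - r)⁻¹ := by
        gcongr
        exact sum_range_pow_sub_le (Real.rpow_nonneg hΛ0 _) hr1 n
    _ = H * K ^ α / (1 - r) * D ^ α := by ring

theorem TileStructure.dist_iterate_le {X : Type*} [MetricSpace X] [CompactSpace X]
    {F : ExpandingThurston X} {C : Set X} (T : TileStructure F C) {Λ C₀ : ℝ} (hC₀ : 0 < C₀)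
    (hexpand : ∀ (k n : ℕ), ∀ t ∈ T.tiles (n + k), ∀ x ∈ t, ∀ y ∈ t,
      C₀⁻¹ * dist x y ≤ dist (F.f^[n] x) (F.f^[n] y) / Λ ^ n)
    {n m j : ℕ} (hnm : n ≤ m) (hjn : j ≤ n) {t : Set X} (ht : t ∈ T.tiles m)
    {x y : X} (hx : x ∈ t) (hy : y ∈ t) :
    dist (F.f^[j] x) (F.f^[j] y) ≤ C₀ * (dist (F.f^[n] x) (F.f^[n] y) / Λ ^ (n - j)) := by
  have himage : F.f^[j] '' t ∈ T.tiles ((n - j) + (m - n)) := by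
    rw [show n - j + (m - n) = m - j by omega]
    exact T.image_mem j (m - j) t (by rwa [Nat.add_sub_cancel' (hjn.trans hnm)])
  have hiter : ∀ z, F.f^[n - j] (F.f^[j] z) = F.f^[n] z := fun z => by
    rw [← Function.iterate_add_apply, Nat.sub_add_cancel hjn]
  have h := hexpand (m - n) (n - j) _ himage _ ⟨x, hx, rfl⟩ _ ⟨y, hy, rfl⟩
  rw [hiter, hiter] at h
  exact (inv_mul_le_iff₀ hC₀).mp h

theorem birkhoff_sum_distortion_general {X : Type*} [MetricSpace X] [CompactSpace X]
    (F : ExpandingThurston X) (C : Set X) (T : TileStructure F C)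
    (Λ : ℝ) (hvis : IsVisualMetric T Λ)
    (α : ℝ) (hα : 0 < α ∧ α ≤ 1)
    (C₀ : ℝ) (hC₀ : 1 < C₀)
    (hdist : ∀ (k n : ℕ), ∀ t ∈ T.tiles (n + k), ∀ x ∈ t, ∀ y ∈ t,
      C₀⁻¹ * dist x y ≤ dist (F.f^[n] x) (F.f^[n] y) / Λ ^ n ∧
      dist (F.f^[n] x) (F.f^[n] y) / Λ ^ n ≤ C₀ * dist x y)
    (φ : X → ℝ) (Hc : ℝ) (hHc : 0 ≤ Hc)
    (hφ : ∀ x y : X, |φ x - φ y| ≤ Hc * dist x y ^ α) :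
    ∀ (n m : ℕ), n ≤ m → ∀ t ∈ T.tiles m, ∀ x ∈ t, ∀ y ∈ t,
      |birkhoffSum F.f φ n x - birkhoffSum F.f φ n y| ≤
        Hc * C₀ ^ α / (1 - Λ ^ (-α)) * dist (F.f^[n] x) (F.f^[n] y) ^ α := by
  intro n m hnm t ht x hx y hy
  have hC₀0 : 0 < C₀ := zero_lt_one.trans hC₀
  refine abs_birkhoffSum_sub_le_of_dist_iterate_le hHc hα.1 hC₀0.le hvis.1 dist_nonneg hφ
    fun j hj => T.dist_iterate_le hC₀0 (fun k n t ht x hx y hy => (hdist k n t ht x hx y hy).1)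
      hnm hj.le ht hx hy

/-- (Distortion of Birkhoff sums.) With `C₀` the metric distortion
constant and `Hc = |φ|_α` the Hölder seminorm of `φ`, setting
`C₁ = Hc C₀^α/(1 − Λ^{−α})`, for all `n ≤ m`, every `m`-tile `t` and `x, y ∈ t`:
`|S_nφ(x) − S_nφ(y)| ≤ C₁ d(fⁿ(x), fⁿ(y))^α`. -/
theorem birkhoff_sum_distortion {X : Type*} [MetricSpace X] [CompactSpace X]
    (F : ExpandingThurston X) (C : Set X) (T : TileStructure F C)
    (hC : IsJordanCurve C) (hpost : F.post ⊆ C)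
    (N : ℕ) (hN : 1 ≤ N) (hinv : F.f^[N] '' C ⊆ C)
    (Λ : ℝ) (hvis : IsVisualMetric T Λ)
    (α : ℝ) (hα : 0 < α ∧ α ≤ 1)
    (C₀ : ℝ) (hC₀ : 1 < C₀)
    (hdist : ∀ (k n : ℕ), ∀ t ∈ T.tiles (n + k), ∀ x ∈ t, ∀ y ∈ t,
      C₀⁻¹ * dist x y ≤ dist (F.f^[n] x) (F.f^[n] y) / Λ ^ n ∧
      dist (F.f^[n] x) (F.f^[n] y) / Λ ^ n ≤ C₀ * dist x y)
    (φ : X → ℝ) (Hc : ℝ) (hHc : 0 ≤ Hc)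
    (hφ : ∀ x y : X, |φ x - φ y| ≤ Hc * dist x y ^ α) :
    ∀ (n m : ℕ), n ≤ m → ∀ t ∈ T.tiles m, ∀ x ∈ t, ∀ y ∈ t,
      |birkhoffSum F.f φ n x - birkhoffSum F.f φ n y| ≤
        Hc * C₀ ^ α / (1 - Λ ^ (-α)) * dist (F.f^[n] x) (F.f^[n] y) ^ α :=
  birkhoff_sum_distortion_general F C T Λ hvis α hα C₀ hC₀ hdist φ Hc hHc hφ
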